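/- arXiv:1806.07168 — 8 statements merged into one kernel-verified Lean document; each statement's English description precedes it below -/
import Mathlib

section
/- If v ∈ ℝⁿ contains both a positive and a negative entry, and w ∈ ℝⁿ is nonzero, then there exists an invertible n×n matrix B with all entries nonnegative such that Bv = w. -/
def Reach {n : ℕ} (v w : Fin n → ℝ) : Prop :=
  ∃ B : Matrix (Fin n) (Fin n) ℝ,
    (∀ i j, 0 ≤ B i j) ∧ IsUnit B ∧ B.mulVec v = w

lemma reach_trans {n : ℕ} {u v w : Fin n → ℝ} (h1 : Reach u v) (h2 : Reach v w) :
    Reach u w := by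
  obtain ⟨B, hB0, hBu, hBv⟩ := h1
  obtain ⟨C, hC0, hCu, hCv⟩ := h2
  refine ⟨C * B, ?_, hCu.mul hBu, ?_⟩
  · intro i j
    rw [Matrix.mul_apply]
    exact Finset.sum_nonneg fun k _ => mul_nonneg (hC0 i k) (hB0 k j)
  · rw [← Matrix.mulVec_mulVec, hBv, hCv]

lemma reach_add {n : ℕ} (x : Fin n → ℝ) (C : Matrix (Fin n) (Fin n) ℝ)
    (h0 : ∀ i j, 0 ≤ C i j) (hsq : C * C = 0) :
    Reach x (x + C.mulVec x) := by
  have h1 : (1 + C) * (1 - C) = 1 := by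
    have : (1 + C) * (1 - C) = 1 - C * C := by noncomm_ring
    rw [this, hsq, sub_zero]
  have h2 : (1 - C) * (1 + C) = 1 := by
    have : (1 - C) * (1 + C) = 1 - C * C := by noncomm_ring
    rw [this, hsq, sub_zero]
  refine ⟨1 + C, ?_, ⟨⟨1 + C, 1 - C, h1, h2⟩, rfl⟩, ?_⟩
  · intro i j
    have h1' : (0:ℝ) ≤ (1 : Matrix (Fin n) (Fin n) ℝ) i j := by
      by_cases h : i = j <;> simp [Matrix.one_apply, h]
    have := add_nonneg h1' (h0 i j)
    simpa using this
  · rw [Matrix.add_mulVec, Matrix.one_mulVec]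

lemma reach_transvection {n : ℕ} (x : Fin n → ℝ) (i j : Fin n) (hij : i ≠ j)
    (t : ℝ) (ht : 0 ≤ t) :
    Reach x (Function.update x i (x i + t * x j)) := by
  set C : Matrix (Fin n) (Fin n) ℝ := Matrix.of fun k l => if k = i ∧ l = j then t else 0 with hC
  have h0 : ∀ k l, 0 ≤ C k l := by
    intro k l
    by_cases h : k = i ∧ l = j <;> simp [hC, h, ht]
  have hsq : C * C = 0 := by
    ext k l
    rw [Matrix.mul_apply]
    simp only [Matrix.zero_apply]
    apply Finset.sum_eq_zero
    intro m _
    by_cases h1 : k = i ∧ m = j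
    · have h2 : ¬ (m = i ∧ l = j) := fun h2 => hij (h2.1.symm.trans h1.2)
      simp only [hC, Matrix.of_apply, if_neg h2, mul_zero]
    · simp [hC, h1]
  have hmv : C.mulVec x = fun k => if k = i then t * x j else 0 := by
    funext k
    rw [Matrix.mulVec, dotProduct]
    have : ∀ l, C k l * x l = if l = j then (if k = i then t * x j else 0) else 0 := by
      intro l
      by_cases hl : l = j <;> by_cases hk : k = i <;> simp [hC, hl, hk]
    simp only [this]
    rw [Finset.sum_ite_eq' Finset.univ j]
    simp
  have := reach_add x C h0 hsq
  rw [hmv] at this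
  convert this using 1
  funext k
  by_cases hk : k = i
  · subst hk; simp [Function.update_self]
  · simp [Function.update_of_ne hk, hk]

lemma reach_two {n : ℕ} (x : Fin n → ℝ) (P Q : Fin n) (hPQ : P ≠ Q)
    (f g : Fin n → ℝ) (hf : ∀ k, 0 ≤ f k) (hg : ∀ k, 0 ≤ g k)
    (hfP : f P = 0) (hfQ : f Q = 0) (hgP : g P = 0) (hgQ : g Q = 0) :
    Reach x (fun k => x k + f k * x P + g k * x Q) := by
  set C : Matrix (Fin n) (Fin n) ℝ :=
    Matrix.of fun k l => if l = P then f k else if l = Q then g k else 0 with hC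
  have h0 : ∀ k l, 0 ≤ C k l := by
    intro k l
    by_cases h1 : l = P
    · simp [hC, h1, hf]
    · by_cases h2 : l = Q <;> simp [hC, h1, h2, hg, Ne.symm hPQ]
  have hrow : ∀ m l, (m = P ∨ m = Q) → C m l = 0 := by
    intro m l hm
    rcases hm with hm | hm
    · by_cases h1 : l = P
      · simp [hC, hm, h1, hfP]
      · by_cases h2 : l = Q <;> simp [hC, hm, h1, h2, hgP, Ne.symm hPQ]
    · by_cases h1 : l = P
      · simp [hC, hm, h1, hfQ]
      · by_cases h2 : l = Q <;> simp [hC, hm, h1, h2, hgQ, Ne.symm hPQ]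
  have hsq : C * C = 0 := by
    ext k l
    rw [Matrix.mul_apply]
    simp only [Matrix.zero_apply]
    apply Finset.sum_eq_zero
    intro m _
    by_cases hm : m = P ∨ m = Q
    · rw [hrow m l hm, mul_zero]
    · push_neg at hm
      have : C k m = 0 := by simp [hC, hm.1, hm.2]
      rw [this, zero_mul]
  have hmv : C.mulVec x = fun k => f k * x P + g k * x Q := by
    funext k
    rw [Matrix.mulVec, dotProduct]
    have : ∀ l, C k l * x l =
        (if l = P then f k * x P else 0) + (if l = Q then g k * x Q else 0) := by
      intro l
      by_cases h1 : l = P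
      · subst h1; simp [hC, hPQ, Ne.symm hPQ]
      · by_cases h2 : l = Q <;> simp [hC, h1, h2, Ne.symm hPQ]
    simp only [this]
    rw [Finset.sum_add_distrib, Finset.sum_ite_eq' Finset.univ P, Finset.sum_ite_eq' Finset.univ Q]
    simp
  have := reach_add x C h0 hsq
  rw [hmv] at this
  convert this using 1
  funext k
  simp [add_assoc]

lemma reach_scale {n : ℕ} (x : Fin n → ℝ) (i : Fin n) (c : ℝ) (hc : 0 < c) :
    Reach x (Function.update x i (c * x i)) := by
  set d : Fin n → ℝ := fun j => if j = i then c else 1 with hd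
  set d' : Fin n → ℝ := fun j => if j = i then c⁻¹ else 1 with hd'
  have hdd : Matrix.diagonal d * Matrix.diagonal d' = 1 := by
    rw [Matrix.diagonal_mul_diagonal]
    ext k l
    by_cases h : k = l
    · subst h
      rw [Matrix.diagonal_apply_eq, Matrix.one_apply_eq]
      by_cases h2 : k = i <;> simp [hd, hd', h2, mul_inv_cancel₀ hc.ne']
    · rw [Matrix.diagonal_apply_ne _ h, Matrix.one_apply_ne h]
  have hdd' : Matrix.diagonal d' * Matrix.diagonal d = 1 := by
    rw [Matrix.diagonal_mul_diagonal]
    ext k l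
    by_cases h : k = l
    · subst h
      rw [Matrix.diagonal_apply_eq, Matrix.one_apply_eq]
      by_cases h2 : k = i <;> simp [hd, hd', h2, inv_mul_cancel₀ hc.ne']
    · rw [Matrix.diagonal_apply_ne _ h, Matrix.one_apply_ne h]
  refine ⟨Matrix.diagonal d, ?_, ⟨⟨_, _, hdd, hdd'⟩, rfl⟩, ?_⟩
  · intro k l
    by_cases h : k = l
    · subst h
      by_cases h2 : k = i <;> simp [hd, h2, hc.le]
    · simp [Matrix.diagonal_apply_ne _ h]
  · funext k
    rw [Matrix.mulVec_diagonal]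
    by_cases h : k = i
    · subst h; simp [hd]
    · simp [hd, h, Function.update_of_ne h]

lemma reach_swap {n : ℕ} (x : Fin n → ℝ) (i j : Fin n) :
    Reach x (fun k => x (Equiv.swap i j k)) := by
  set B : Matrix (Fin n) (Fin n) ℝ :=
    Matrix.of fun k l => if l = Equiv.swap i j k then 1 else 0 with hB
  have hBB : B * B = 1 := by
    ext k l
    rw [Matrix.mul_apply]
    have : ∀ m, B k m * B m l =
        if m = Equiv.swap i j k then (if l = Equiv.swap i j m then 1 else 0) else 0 := by
      intro m
      by_cases h : m = Equiv.swap i j k <;> simp [hB, h]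
    simp only [this]
    rw [Finset.sum_ite_eq' Finset.univ]
    simp [Equiv.swap_apply_self, Matrix.one_apply, eq_comm]
  refine ⟨B, ?_, ⟨⟨B, B, hBB, hBB⟩, rfl⟩, ?_⟩
  · intro k l
    by_cases h : l = Equiv.swap i j k <;> simp [hB, h]
  · funext k
    rw [Matrix.mulVec, dotProduct]
    have : ∀ l, B k l * x l = if l = Equiv.swap i j k then x (Equiv.swap i j k) else 0 := by
      intro l
      by_cases h : l = Equiv.swap i j k <;> simp [hB, h]
    simp only [this]
    rw [Finset.sum_ite_eq' Finset.univ]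
    simp

lemma stage1 {n : ℕ} (P Q : Fin n) (hPQ : P ≠ Q) (v w : Fin n → ℝ)
    (hP : 0 < v P) (hQ : v Q < 0) :
    Reach v (fun k => if k = P ∨ k = Q then v k else w k) := by
  set f : Fin n → ℝ := fun k => if k = P ∨ k = Q then 0 else max (w k - v k) 0 / v P with hf
  set g : Fin n → ℝ := fun k => if k = P ∨ k = Q then 0 else min (w k - v k) 0 / v Q with hg
  have hf0 : ∀ k, 0 ≤ f k := by
    intro k
    by_cases h : k = P ∨ k = Q
    · simp [hf, h]
    · simp only [hf, if_neg h]
      exact div_nonneg (le_max_right _ _) hP.le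
  have hg0 : ∀ k, 0 ≤ g k := by
    intro k
    by_cases h : k = P ∨ k = Q
    · simp [hg, h]
    · simp only [hg, if_neg h]
      rw [div_nonneg_iff]
      right
      exact ⟨min_le_right _ _, hQ.le⟩
  have := reach_two v P Q hPQ f g hf0 hg0 (by simp [hf]) (by simp [hf]) (by simp [hg]) (by simp [hg])
  convert this using 1
  funext k
  by_cases h : k = P ∨ k = Q
  · simp [hf, hg, h]
  · simp only [hf, hg, if_neg h]
    rw [div_mul_cancel₀ _ hP.ne', div_mul_cancel₀ _ hQ.ne, add_assoc, max_add_min]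
    ring

lemma stage2 {n : ℕ} (P Q : Fin n) (hPQ : P ≠ Q) (x w : Fin n → ℝ)
    (hxP : 0 < x P) (hxQ : x Q < 0)
    (hx : ∀ k, k ≠ P → k ≠ Q → x k = w k) (hw : w ≠ 0) :
    Reach x w := by
  have hQP : Q ≠ P := hPQ.symm
  by_cases h1 : 0 < w P
  · -- scale P to w P
    have r1 := reach_scale x P (w P / x P) (div_pos h1 hxP)
    set x' := Function.update x P (w P / x P * x P) with hx'
    have hx'P : x' P = w P := by
      rw [hx', Function.update_self, div_mul_cancel₀ _ hxP.ne']
    have hx'Q : x' Q = x Q := Function.update_of_ne hQP _ _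
    by_cases h2 : w Q < 0
    · have r2 := reach_scale x' Q (w Q / x' Q) (by
        rw [hx'Q]; exact div_pos_of_neg_of_neg h2 hxQ)
      have heq : Function.update x' Q (w Q / x' Q * x' Q) = w := by
        funext k
        by_cases hk : k = Q
        · subst hk
          rw [Function.update_self, hx'Q, div_mul_cancel₀ _ hxQ.ne]
        · rw [Function.update_of_ne hk]
          by_cases hkP : k = P
          · subst hkP; exact hx'P
          · rw [hx', Function.update_of_ne hkP]; exact hx k hkP hk
      exact reach_trans r1 (heq ▸ r2)
    · push_neg at h2
      have ht : 0 ≤ (w Q - x Q) / w P :=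
        div_nonneg (by linarith) h1.le
      have r2 := reach_transvection x' Q P hQP ((w Q - x Q) / w P) ht
      have heq : Function.update x' Q (x' Q + (w Q - x Q) / w P * x' P) = w := by
        funext k
        by_cases hk : k = Q
        · subst hk
          rw [Function.update_self, hx'Q, hx'P, div_mul_cancel₀ _ h1.ne']
          ring
        · rw [Function.update_of_ne hk]
          by_cases hkP : k = P
          · subst hkP; exact hx'P
          · rw [hx', Function.update_of_ne hkP]; exact hx k hkP hk
      exact reach_trans r1 (heq ▸ r2)
  · push_neg at h1
    by_cases h2 : w Q < 0
    · -- scale Q to w Q, then pull P down from Q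
      have r1 := reach_scale x Q (w Q / x Q) (div_pos_of_neg_of_neg h2 hxQ)
      set x' := Function.update x Q (w Q / x Q * x Q) with hx'
      have hx'Q : x' Q = w Q := by
        rw [hx', Function.update_self, div_mul_cancel₀ _ hxQ.ne]
      have hx'P : x' P = x P := Function.update_of_ne hPQ _ _
      have ht : 0 ≤ (w P - x P) / w Q :=
        (div_pos_of_neg_of_neg (by linarith) h2).le
      have r2 := reach_transvection x' P Q hPQ ((w P - x P) / w Q) ht
      have heq : Function.update x' P (x' P + (w P - x P) / w Q * x' Q) = w := by
        funext k
        by_cases hk : k = P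
        · subst hk
          rw [Function.update_self, hx'Q, hx'P, div_mul_cancel₀ _ h2.ne]
          ring
        · rw [Function.update_of_ne hk]
          by_cases hkQ : k = Q
          · subst hkQ; exact hx'Q
          · rw [hx', Function.update_of_ne hkQ]; exact hx k hk hkQ
      exact reach_trans r1 (heq ▸ r2)
    · push_neg at h2
      -- now w P ≤ 0 ≤ w Q
      by_cases h3 : w P = 0 ∧ w Q = 0
      · -- zero out both P and Q, using some k₀ with w k₀ ≠ 0
        obtain ⟨k₀, hk₀⟩ := Function.ne_iff.mp hw
        have hk₀P : k₀ ≠ P := fun h => hk₀ (h ▸ h3.1)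
        have hk₀Q : k₀ ≠ Q := fun h => hk₀ (h ▸ h3.2)
        have hxk₀ : x k₀ = w k₀ := hx k₀ hk₀P hk₀Q
        rcases hk₀.lt_or_gt with hneg | hpos
        · -- w k₀ < 0 : Q := 0 from P, then P := 0 from k₀
          have ht₁ : 0 ≤ (-x Q) / x P := div_nonneg (by linarith) hxP.le
          have r1 := reach_transvection x Q P hQP ((-x Q) / x P) ht₁
          set x' := Function.update x Q (x Q + (-x Q) / x P * x P) with hx'
          have hx'Q : x' Q = 0 := by
            rw [hx', Function.update_self, div_mul_cancel₀ _ hxP.ne']; ring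
          have hx'P : x' P = x P := Function.update_of_ne hPQ _ _
          have hx'k₀ : x' k₀ = w k₀ := by
            rw [hx', Function.update_of_ne hk₀Q]; exact hxk₀
          have ht₂ : 0 ≤ (-x P) / w k₀ :=
            (div_pos_of_neg_of_neg (by linarith) hneg).le
          have r2 := reach_transvection x' P k₀ hk₀P.symm ((-x P) / w k₀) ht₂
          have heq : Function.update x' P (x' P + (-x P) / w k₀ * x' k₀) = w := by
            funext k
            by_cases hk : k = P
            · subst hk
              rw [Function.update_self, hx'P, hx'k₀, div_mul_cancel₀ _ hk₀]
              rw [h3.1]; ring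
            · rw [Function.update_of_ne hk]
              by_cases hkQ : k = Q
              · subst hkQ; rw [hx'Q, h3.2]
              · rw [hx', Function.update_of_ne hkQ]; exact hx k hk hkQ
          exact reach_trans r1 (heq ▸ r2)
        · -- w k₀ > 0 : P := 0 from Q, then Q := 0 from k₀
          have ht₁ : 0 ≤ (-x P) / x Q := (div_pos_of_neg_of_neg (by linarith) hxQ).le
          have r1 := reach_transvection x P Q hPQ ((-x P) / x Q) ht₁
          set x' := Function.update x P (x P + (-x P) / x Q * x Q) with hx'
          have hx'P : x' P = 0 := by
            rw [hx', Function.update_self, div_mul_cancel₀ _ hxQ.ne]; ring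
          have hx'Q : x' Q = x Q := Function.update_of_ne hQP _ _
          have hx'k₀ : x' k₀ = w k₀ := by
            rw [hx', Function.update_of_ne hk₀P]; exact hxk₀
          have ht₂ : 0 ≤ (-x Q) / w k₀ := div_nonneg (by linarith) hpos.le
          have r2 := reach_transvection x' Q k₀ hk₀Q.symm ((-x Q) / w k₀) ht₂
          have heq : Function.update x' Q (x' Q + (-x Q) / w k₀ * x' k₀) = w := by
            funext k
            by_cases hk : k = Q
            · subst hk
              rw [Function.update_self, hx'Q, hx'k₀, div_mul_cancel₀ _ hk₀]
              rw [h3.2]; ring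
            · rw [Function.update_of_ne hk]
              by_cases hkP : k = P
              · subst hkP; rw [hx'P, h3.1]
              · rw [hx', Function.update_of_ne hkP]; exact hx k hkP hk
          exact reach_trans r1 (heq ▸ r2)
      · -- swap P and Q first
        have r1 := reach_swap x P Q
        set x' : Fin n → ℝ := fun k => x (Equiv.swap P Q k) with hx'
        have hx'P : x' P = x Q := by rw [hx']; simp [Equiv.swap_apply_left]
        have hx'Q : x' Q = x P := by rw [hx']; simp [Equiv.swap_apply_right]
        have hx'k : ∀ k, k ≠ P → k ≠ Q → x' k = w k := by
          intro k hkP hkQ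
          rw [hx']
          simp only [Equiv.swap_apply_of_ne_of_ne hkP hkQ]
          exact hx k hkP hkQ
        by_cases h4 : 0 < w Q
        · have r2 := reach_scale x' Q (w Q / x' Q) (by rw [hx'Q]; exact div_pos h4 hxP)
          set x'' := Function.update x' Q (w Q / x' Q * x' Q) with hx''
          have hx''Q : x'' Q = w Q := by
            rw [hx'', Function.update_self, hx'Q, div_mul_cancel₀ _ hxP.ne']
          have hx''P : x'' P = x Q := by
            rw [hx'', Function.update_of_ne hPQ]; exact hx'P
          by_cases h5 : w P < 0
          · have r3 := reach_scale x'' P (w P / x'' P) (by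
              rw [hx''P]; exact div_pos_of_neg_of_neg h5 hxQ)
            have heq : Function.update x'' P (w P / x'' P * x'' P) = w := by
              funext k
              by_cases hk : k = P
              · subst hk
                rw [Function.update_self, hx''P, div_mul_cancel₀ _ hxQ.ne]
              · rw [Function.update_of_ne hk]
                by_cases hkQ : k = Q
                · subst hkQ; exact hx''Q
                · rw [hx'', Function.update_of_ne hkQ]; exact hx'k k hk hkQ
            exact reach_trans r1 (reach_trans r2 (heq ▸ r3))
          · have h5' : w P = 0 := le_antisymm h1 (not_lt.mp h5)
            have ht : 0 ≤ (-x Q) / w Q := div_nonneg (by linarith) h4.le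
            have r3 := reach_transvection x'' P Q hPQ ((-x Q) / w Q) ht
            have heq : Function.update x'' P (x'' P + (-x Q) / w Q * x'' Q) = w := by
              funext k
              by_cases hk : k = P
              · subst hk
                rw [Function.update_self, hx''P, hx''Q, div_mul_cancel₀ _ h4.ne']
                rw [h5']; ring
              · rw [Function.update_of_ne hk]
                by_cases hkQ : k = Q
                · subst hkQ; exact hx''Q
                · rw [hx'', Function.update_of_ne hkQ]; exact hx'k k hk hkQ
            exact reach_trans r1 (reach_trans r2 (heq ▸ r3))
        · have h4' : w Q = 0 := le_antisymm (not_lt.mp h4) h2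
          have h5 : w P < 0 := by
            rcases h1.lt_or_eq with h | h
            · exact h
            · exact absurd ⟨h, h4'⟩ h3
          have r2 := reach_scale x' P (w P / x' P) (by
            rw [hx'P]; exact div_pos_of_neg_of_neg h5 hxQ)
          set x'' := Function.update x' P (w P / x' P * x' P) with hx''
          have hx''P : x'' P = w P := by
            rw [hx'', Function.update_self, hx'P, div_mul_cancel₀ _ hxQ.ne]
          have hx''Q : x'' Q = x P := by
            rw [hx'', Function.update_of_ne hQP]; exact hx'Q
          have ht : 0 ≤ (-x P) / w P := (div_pos_of_neg_of_neg (by linarith) h5).le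
          have r3 := reach_transvection x'' Q P hQP ((-x P) / w P) ht
          have heq : Function.update x'' Q (x'' Q + (-x P) / w P * x'' P) = w := by
            funext k
            by_cases hk : k = Q
            · subst hk
              rw [Function.update_self, hx''P, hx''Q, div_mul_cancel₀ _ h5.ne]
              rw [h4']; ring
            · rw [Function.update_of_ne hk]
              by_cases hkP : k = P
              · subst hkP; exact hx''P
              · rw [hx'', Function.update_of_ne hkP]; exact hx'k k hkP hk
          exact reach_trans r1 (reach_trans r2 (heq ▸ r3))

theorem stmt0 (n : ℕ) (v w : Fin n → ℝ)
    (hpos : ∃ i, 0 < v i) (hneg : ∃ i, v i < 0) (hw : w ≠ 0) :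
    ∃ B : Matrix (Fin n) (Fin n) ℝ,
      (∀ i j, 0 ≤ B i j) ∧ IsUnit B ∧ B.mulVec v = w := by
  obtain ⟨P, hP⟩ := hpos
  obtain ⟨Q, hQ⟩ := hneg
  have hPQ : P ≠ Q := by rintro rfl; linarith
  have r1 := stage1 P Q hPQ v w hP hQ
  set x : Fin n → ℝ := fun k => if k = P ∨ k = Q then v k else w k with hxdef
  have hxP : 0 < x P := by
    have h : x P = v P := by rw [hxdef]; simp
    rw [h]; exact hP
  have hxQ : x Q < 0 := by
    have h : x Q = v Q := by rw [hxdef]; simp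
    rw [h]; exact hQ
  have hxk : ∀ k, k ≠ P → k ≠ Q → x k = w k := by
    intro k hkP hkQ
    simp only [hxdef]
    rw [if_neg (by tauto)]
  exact reach_trans r1 (stage2 P Q hPQ x w hxP hxQ hxk hw)
end

section
/- If v ∈ ℝⁿ satisfies v ≥ 0 (entrywise) with v ≠ 0, and w ∈ ℝⁿ satisfies w > 0 (entrywise), then there exists an invertible n×n matrix B with all nonnegative entries such that Bv = w. -/
/-!
Pick `k` with `v k > 0` and `ε > 0` so small that `w - ε v > 0`. The rank-one update
`B = ε I + c e_kᵀ` with `c = (w - ε v) / v k` is entrywise nonnegative and sends `v` to `w`;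
it is invertible because `B x = ε x + x k c`, whose `k`-th coordinate is `(ε + c k) x k`.
-/

open Matrix Filter Topology

section RankOneUpdate

variable {ι K : Type*} [DecidableEq ι]

theorem smul_one_add_vecMulVec_single_mulVec [Fintype ι] [CommSemiring K]
    (ε : K) (c v : ι → K) (k : ι) :
    (ε • (1 : Matrix ι ι K) + vecMulVec c (Pi.single k 1)) *ᵥ v = ε • v + v k • c := by
  ext i
  simp [add_mulVec, smul_mulVec, vecMulVec_mulVec, mul_comm]

theorem isUnit_smul_one_add_vecMulVec_single [Fintype ι] [Field K] {ε : K} {c : ι → K} {k : ι}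
    (hε : ε ≠ 0) (hεc : ε + c k ≠ 0) :
    IsUnit (ε • (1 : Matrix ι ι K) + vecMulVec c (Pi.single k 1)) := by
  rw [← mulVec_injective_iff_isUnit]
  intro x y hxy
  simp only [smul_one_add_vecMulVec_single_mulVec] at hxy
  have hk : x k = y k := by
    have := congrFun hxy k
    simp only [Pi.add_apply, Pi.smul_apply, smul_eq_mul] at this
    exact mul_left_cancel₀ hεc (by linear_combination this)
  rw [hk, add_left_inj] at hxy
  exact smul_right_injective _ hε hxy

theorem smul_one_add_vecMulVec_single_nonneg [Semiring K] [PartialOrder K] [IsOrderedRing K]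
    {ε : K} {c : ι → K} (hε : 0 ≤ ε) (hc : 0 ≤ c) (k i j : ι) :
    0 ≤ (ε • (1 : Matrix ι ι K) + vecMulVec c (Pi.single k 1)) i j := by
  rw [Matrix.add_apply, Matrix.smul_apply, one_apply, vecMulVec_apply, Pi.single_apply,
    smul_eq_mul]
  exact add_nonneg (mul_nonneg hε (by split_ifs <;> simp))
    (mul_nonneg (hc i) (by split_ifs <;> simp))

end RankOneUpdate

theorem exists_pos_forall_mul_lt {ι : Type*} [Finite ι] (v w : ι → ℝ) (hw : ∀ i, 0 < w i) :
    ∃ ε > 0, ∀ i, ε * v i < w i := by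
  have h : ∀ᶠ ε in 𝓝[>] (0 : ℝ), ∀ i, ε * v i < w i := by
    refine eventually_all.2 fun i => nhdsWithin_le_nhds ?_
    have : Tendsto (fun ε : ℝ => ε * v i) (𝓝 0) (𝓝 0) := by
      simpa using (continuous_mul_const (v i)).tendsto 0
    exact this.eventually (gt_mem_nhds (hw i))
  exact (h.and self_mem_nhdsWithin).exists.imp fun ε h => ⟨h.2, h.1⟩

theorem stmt1 (n : ℕ) (v w : Fin n → ℝ)
    (hv : ∀ i, 0 ≤ v i) (hv0 : v ≠ 0) (hw : ∀ i, 0 < w i) :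
    ∃ B : Matrix (Fin n) (Fin n) ℝ,
      (∀ i j, 0 ≤ B i j) ∧ IsUnit B ∧ B.mulVec v = w := by
  obtain ⟨k, hk⟩ := Function.ne_iff.mp hv0
  have hvk : 0 < v k := (hv k).lt_of_ne' hk
  obtain ⟨ε, hε, hεw⟩ := exists_pos_forall_mul_lt v w hw
  set c := (v k)⁻¹ • (w - ε • v)
  have hc : 0 ≤ c := fun i =>
    smul_nonneg (inv_nonneg.2 hvk.le) (sub_nonneg.2 (by simpa using (hεw i).le))
  refine ⟨ε • 1 + vecMulVec c (Pi.single k 1),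
    smul_one_add_vecMulVec_single_nonneg hε.le hc k,
    isUnit_smul_one_add_vecMulVec_single hε.ne' (add_pos_of_pos_of_nonneg hε (hc k)).ne', ?_⟩
  rw [smul_one_add_vecMulVec_single_mulVec, smul_smul, mul_inv_cancel₀ hk, one_smul,
    add_sub_cancel]
end

section
/- Let n > m, let v ∈ ℝⁿ contain both a positive and a negative entry, and let w ∈ ℝᵐ be arbitrary. Then there exists a nonnegative m×n matrix B of full row rank such that Bv = w. -/
/-!
Let `v p > 0`, `v q < 0`, and let `f : Fin m ↪ Fin n` miss `p` (possible since `m < n`).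
Take row `i` of `B` to be `e (f i) + a i • e p + b i • e q` with `a i, b i ≥ 0` solving
`a i * v p + b i * v q = w i - v (f i)`, which the opposite signs of `v p` and `v q` allow.
The columns of `B` indexed by `f` form `1 + b ⬝ (e q ∘ f)ᵀ`, since `f` misses `p`; by the matrix
determinant lemma its determinant is `1 + ∑ i, b i * [f i = q] ≥ 1`, so `B` has full row rank.
-/

open Matrix

theorem exists_nonneg_mul_add_mul_eq {K : Type*} [Field K] [LinearOrder K] [IsStrictOrderedRing K]
    {x y : K} (hx : 0 < x) (hy : y < 0) (s : K) :
    ∃ a b : K, 0 ≤ a ∧ 0 ≤ b ∧ a * x + b * y = s := by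
  rcases le_total 0 s with hs | hs
  · exact ⟨s / x, 0, div_nonneg hs hx.le, le_rfl, by simp [hx.ne']⟩
  · exact ⟨0, s / y, le_rfl, div_nonneg_of_nonpos hs hy.le, by simp [hy.ne]⟩

theorem Function.Embedding.exists_forall_ne_of_card_lt {α β : Type*} [Fintype α] [Fintype β]
    [DecidableEq β] (h : Fintype.card α < Fintype.card β) (p : β) :
    ∃ f : α ↪ β, ∀ i, f i ≠ p := by
  obtain ⟨g⟩ : Nonempty (α ↪ {j // j ≠ p}) :=
    nonempty_of_card_le (by simp [Fintype.card_subtype_compl]; omega)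
  exact ⟨g.trans (Function.Embedding.subtype _), fun i => (g i).2⟩

namespace Matrix

theorem rank_eq_card_of_isUnit_det_submatrix {m n R : Type*} [Fintype m] [Fintype n]
    [DecidableEq m] [CommRing R] [StrongRankCondition R] (A : Matrix m n R) (c : m → n)
    (h : IsUnit (A.submatrix id c).det) : A.rank = Fintype.card m :=
  le_antisymm A.rank_le_card_height <|
    rank_of_isUnit _ ((isUnit_iff_isUnit_det _).mpr h) ▸ A.rank_submatrix_le id c

theorem det_one_add_vecMulVec {m R : Type*} [Fintype m] [DecidableEq m] [CommRing R]
    (u v : m → R) : det (1 + vecMulVec u v) = 1 + v ⬝ᵥ u := by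
  rw [vecMulVec_eq Unit, det_one_add_replicateCol_mul_replicateRow]

variable {ι κ K : Type*} [DecidableEq κ]

def selectionAddTwoCols [Semiring K] (f : ι → κ) (p q : κ) (a b : ι → K) : Matrix ι κ K :=
  (1 : Matrix κ κ K).submatrix f id + vecMulVec a (Pi.single p 1) + vecMulVec b (Pi.single q 1)

theorem selectionAddTwoCols_nonneg [Semiring K] [PartialOrder K] [IsOrderedRing K] (f : ι → κ)
    (p q : κ) {a b : ι → K} (ha : 0 ≤ a) (hb : 0 ≤ b) (i : ι) (j : κ) :
    0 ≤ selectionAddTwoCols f p q a b i j := by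
  have hone : ∀ k l : κ, (0 : K) ≤ (1 : Matrix κ κ K) k l := fun k l => by
    rw [one_apply]; split_ifs <;> simp
  have hsingle : ∀ r : κ, 0 ≤ (Pi.single r 1 : κ → K) := fun r => Pi.single_nonneg.2 zero_le_one
  exact add_nonneg (add_nonneg (hone _ _) (mul_nonneg (ha i) (hsingle p j)))
    (mul_nonneg (hb i) (hsingle q j))

theorem selectionAddTwoCols_mulVec [Fintype κ] [CommSemiring K] (f : ι → κ) (p q : κ)
    (a b : ι → K) (v : κ → K) :
    selectionAddTwoCols f p q a b *ᵥ v = fun i => v (f i) + a i * v p + b i * v q := by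
  have hsel : (1 : Matrix κ κ K).submatrix f id *ᵥ v = v ∘ f := by
    ext i
    simp [mulVec, dotProduct, one_apply]
  ext i
  simp [selectionAddTwoCols, add_mulVec, hsel, vecMulVec_mulVec, mul_comm]

theorem rank_selectionAddTwoCols [Fintype ι] [Fintype κ] [DecidableEq ι] [Field K] [LinearOrder K]
    [IsStrictOrderedRing K] (f : ι ↪ κ) {p : κ} (hp : ∀ i, f i ≠ p) (q : κ) (a : ι → K)
    {b : ι → K} (hb : 0 ≤ b) : (selectionAddTwoCols f p q a b).rank = Fintype.card ι := by
  refine rank_eq_card_of_isUnit_det_submatrix _ f ?_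
  have hsub : (selectionAddTwoCols f p q a b).submatrix id f =
      1 + vecMulVec b (fun j => (Pi.single q 1 : κ → K) (f j)) := by
    ext i j
    simp [selectionAddTwoCols, vecMulVec_apply, one_apply, Pi.single_apply, hp,
      f.injective.eq_iff]
  have hsingle : 0 ≤ (Pi.single q 1 : κ → K) := Pi.single_nonneg.2 zero_le_one
  have hdot : 0 ≤ (fun j => (Pi.single q 1 : κ → K) (f j)) ⬝ᵥ b :=
    dotProduct_nonneg_of_nonneg (fun j => hsingle (f j)) hb
  rw [hsub, det_one_add_vecMulVec]
  exact (add_pos_of_pos_of_nonneg one_pos hdot).ne'.isUnit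

end Matrix

theorem stmt2 (m n : ℕ) (hmn : m < n) (v : Fin n → ℝ) (w : Fin m → ℝ)
    (hpos : ∃ i, 0 < v i) (hneg : ∃ i, v i < 0) :
    ∃ B : Matrix (Fin m) (Fin n) ℝ,
      (∀ i j, 0 ≤ B i j) ∧ B.rank = m ∧ B.mulVec v = w := by
  obtain ⟨p, hp⟩ := hpos
  obtain ⟨q, hq⟩ := hneg
  obtain ⟨f, hfp⟩ : ∃ f : Fin m ↪ Fin n, ∀ i, f i ≠ p :=
    Function.Embedding.exists_forall_ne_of_card_lt (by simpa using hmn) p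
  choose a b ha hb hab using fun i => exists_nonneg_mul_add_mul_eq hp hq (w i - v (f i))
  refine ⟨selectionAddTwoCols f p q a b, selectionAddTwoCols_nonneg f p q ha hb, ?_, ?_⟩
  · simpa using rank_selectionAddTwoCols f hfp q a hb
  · ext i
    simp only [selectionAddTwoCols_mulVec, add_assoc, hab, add_sub_cancel]
end

section
/- Let X be an invertible n×n real matrix such that neither X⁻¹ nor −X⁻¹ is entrywise nonnegative. Then there exists a vector v ∈ ℝⁿ which has both a positive and a negative entry and satisfies Xv ≥ 0 entrywise. -/
theorem stmt4 (n : ℕ) (X : Matrix (Fin n) (Fin n) ℝ) (hX : IsUnit X)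
    (h1 : ¬ ∀ i j, 0 ≤ X⁻¹ i j) (h2 : ¬ ∀ i j, 0 ≤ (-X⁻¹) i j) :
    ∃ v : Fin n → ℝ, (∃ i, 0 < v i) ∧ (∃ i, v i < 0) ∧ ∀ i, 0 ≤ X.mulVec v i := by
  set A := X⁻¹ with hA
  have hdet : IsUnit X.det := (Matrix.isUnit_iff_isUnit_det X).mp hX
  have hXA : X * A = 1 := Matrix.mul_nonsing_inv X hdet
  -- negative entry of A
  push_neg at h1 h2
  obtain ⟨i0, j0, hneg⟩ := h1
  obtain ⟨p, q, hpos⟩ := h2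
  have hpos : 0 < A p q := by simpa using hpos
  by_cases hc : ∃ j, (∃ i, 0 < A i j) ∧ (∃ i, A i j < 0)
  · -- a sign-mixed column: v = that column
    obtain ⟨j, ⟨i1, h1⟩, ⟨i2, h2⟩⟩ := hc
    refine ⟨fun i => A i j, ⟨i1, h1⟩, ⟨i2, h2⟩, fun i => ?_⟩
    have : X.mulVec (fun k => A k j) i = (X * A) i j := by
      simp [Matrix.mulVec, dotProduct, Matrix.mul_apply]
    rw [this, hXA]
    by_cases h : i = j <;> simp [Matrix.one_apply, h]
  · push_neg at hc
    -- every column is signed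
    have hcol : ∀ j, (∀ i, 0 ≤ A i j) ∨ (∀ i, A i j ≤ 0) := by
      intro j
      by_cases h : ∀ i, 0 ≤ A i j
      · exact Or.inl h
      · push_neg at h
        obtain ⟨i, hi⟩ := h
        right
        intro i'
        by_contra h'
        push_neg at h'
        exact absurd (not_le.mpr hi) (not_not.mpr (hc j ⟨i', h'⟩ i))
    classical
    set wS : Fin n → ℝ := fun j => if ∀ i, 0 ≤ A i j then 1 else 0 with hwS
    set wT : Fin n → ℝ := fun j => if ∀ i, 0 ≤ A i j then 0 else 1 with hwT
    have hwS01 : ∀ j, 0 ≤ wS j := fun j => by simp only [hwS]; split <;> norm_num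
    have hwT01 : ∀ j, 0 ≤ wT j := fun j => by simp only [hwT]; split <;> norm_num
    set S := A.mulVec wS with hSdef
    set T := A.mulVec wT with hTdef
    have hSapp : ∀ i, S i = ∑ j, A i j * wS j := fun i => by
      simp [hSdef, Matrix.mulVec, dotProduct]
    have hTapp : ∀ i, T i = ∑ j, A i j * wT j := fun i => by
      simp [hTdef, Matrix.mulVec, dotProduct]
    have hS : ∀ i, 0 ≤ S i := by
      intro i
      rw [hSapp]
      apply Finset.sum_nonneg
      intro j _
      simp only [hwS]
      split
      · next h => simpa using h i
      · simp
    have hTterm : ∀ i j, A i j * wT j ≤ 0 := by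
      intro i j
      simp only [hwT]
      split
      · simp
      · next h =>
        rcases hcol j with h' | h'
        · exact absurd h' h
        · simpa using h' i
    have hT : ∀ i, T i ≤ 0 := by
      intro i
      rw [hTapp]
      exact Finset.sum_nonpos fun j _ => hTterm i j
    -- T i0 < 0
    have hwTj0 : wT j0 = 1 := by
      simp only [hwT]
      rw [if_neg]
      push_neg
      exact ⟨i0, hneg⟩
    have hTi0 : T i0 < 0 := by
      rw [hTapp]
      have : ∑ j, A i0 j * wT j < ∑ _j : Fin n, (0 : ℝ) := by
        apply Finset.sum_lt_sum (fun j _ => hTterm i0 j)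
        exact ⟨j0, Finset.mem_univ _, by rw [hwTj0]; simpa using hneg⟩
      simpa using this
    have hwSq : wS q = 1 := by
      simp only [hwS]
      rw [if_pos (hc q ⟨p, hpos⟩)]
    have hwTq : wT q = 0 := by
      simp only [hwT]
      rw [if_pos (hc q ⟨p, hpos⟩)]
    -- the minimum ratio
    set N : Finset (Fin n) := Finset.univ.filter (fun i => T i < 0) with hN
    have hNne : N.Nonempty := ⟨i0, by simp [hN, hTi0]⟩
    set m : ℝ := N.inf' hNne (fun i => S i / (-T i)) with hm
    have hm0 : 0 ≤ m := by
      apply Finset.le_inf'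
      intro i hi
      have : T i < 0 := by simpa [hN] using hi
      exact div_nonneg (hS i) (by linarith)
    obtain ⟨istar, histar, hmeq⟩ := Finset.exists_mem_eq_inf' hNne (fun i => S i / (-T i))
    have hTistar : T istar < 0 := by simpa [hN] using histar
    have hzero : S istar + m * T istar = 0 := by
      have h' : m * (-T istar) = S istar := by
        have : m = S istar / (-T istar) := hmeq
        rw [eq_div_iff (ne_of_gt (by linarith))] at this
        exact this
      nlinarith [h']
    have claim1 : ∀ j, 0 ≤ S j + m * T j := by
      intro j
      by_cases hj : T j < 0
      · have hjN : j ∈ N := by simp [hN, hj]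
        have : m ≤ S j / (-T j) := Finset.inf'_le _ hjN
        rw [le_div_iff₀ (by linarith)] at this
        linarith
      · push_neg at hj
        have := mul_nonneg hm0 hj
        linarith [hS j]
    -- key: produce v for a parameter t ≥ 0
    have key : ∀ t : ℝ, 0 ≤ t → (∃ i, 0 < S i + t * T i) → (∃ i, S i + t * T i < 0) →
        ∃ v : Fin n → ℝ, (∃ i, 0 < v i) ∧ (∃ i, v i < 0) ∧ ∀ i, 0 ≤ X.mulVec v i := by
      intro t ht hp hn
      refine ⟨fun i => S i + t * T i, hp, hn, fun i => ?_⟩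
      have hveq : (fun i => S i + t * T i) = A.mulVec (fun j => wS j + t * wT j) := by
        funext i
        rw [hSapp, hTapp]
        simp [Matrix.mulVec, dotProduct, mul_add, Finset.sum_add_distrib,
          Finset.mul_sum]
        exact Finset.sum_congr rfl fun x _ => by ring
      rw [hveq, Matrix.mulVec_mulVec, hXA, Matrix.one_mulVec]
      exact add_nonneg (hwS01 i) (mul_nonneg ht (hwT01 i))
    by_cases hp1 : ∃ j, 0 < S j + (m + 1) * T j
    · refine key (m + 1) (by linarith) hp1 ⟨istar, ?_⟩
      nlinarith
    · push_neg at hp1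
      by_cases hp2 : ∃ j, 0 < S j + m * T j
      · obtain ⟨j, hj⟩ := hp2
        have hTj : T j < 0 := by
          have := hp1 j
          nlinarith
        set r : ℝ := S j / (-T j) with hr
        have hmr : m < r := by
          rw [hr, lt_div_iff₀ (by linarith)]
          nlinarith
        set t : ℝ := (m + r) / 2 with htdef
        have hmt : m < t := by rw [htdef]; linarith
        have htr : t < r := by rw [htdef]; linarith
        refine key t (by linarith) ⟨j, ?_⟩ ⟨istar, ?_⟩
        · rw [hr, lt_div_iff₀ (by linarith)] at htr
          nlinarith
        · nlinarith
      · push_neg at hp2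
        exfalso
        have hfz : ∀ j, S j + m * T j = 0 := fun j => le_antisymm (hp2 j) (claim1 j)
        have hAw : A.mulVec (fun j => wS j + m * wT j) = 0 := by
          funext i
          have : (fun i => S i + m * T i) = A.mulVec (fun j => wS j + m * wT j) := by
            funext i
            rw [hSapp, hTapp]
            simp [Matrix.mulVec, dotProduct, mul_add, Finset.sum_add_distrib,
              Finset.mul_sum]
            exact Finset.sum_congr rfl fun x _ => by ring
          rw [← this]
          simpa using hfz i
        have hw0 : (fun j => wS j + m * wT j) = 0 := by
          have h1 : X.mulVec (A.mulVec (fun j => wS j + m * wT j)) = 0 := by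
            rw [hAw, Matrix.mulVec_zero]
          rwa [Matrix.mulVec_mulVec, hXA, Matrix.one_mulVec] at h1
        have : wS q + m * wT q = 0 := congrFun hw0 q
        rw [hwSq, hwTq] at this
        linarith
end

section
/- Let X, Y ∈ ℝ^{n×n} and define L : ℝ^{n×n} → ℝ^{n×n} by L(A) = XAY. If L maps every inverse nonnegative matrix to an inverse nonnegative matrix, then either both X and Y are inverse nonnegative, or both −X and −Y are inverse nonnegative. -/
/-! For `t > 0` the matrix `A = (1 + t E_{kl})⁻¹` is inverse nonnegative, so the hypothesis gives
`(Y⁻¹ X⁻¹)_{ij} + t (Y⁻¹)_{ik} (X⁻¹)_{lj} ≥ 0`; letting `t → ∞`, every product of an entry of `Y⁻¹`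
with an entry of `X⁻¹` is nonnegative. Since `L 1 = X Y` is invertible, `X⁻¹` and `Y⁻¹` are
nonzero, so all their entries have one common sign. -/

def InvNonneg {n : ℕ} (M : Matrix (Fin n) (Fin n) ℝ) : Prop :=
  IsUnit M ∧ ∀ i j, 0 ≤ M⁻¹ i j

open Matrix

section LinearOrderedField

variable {𝕜 : Type*} [Field 𝕜] [LinearOrder 𝕜] [IsStrictOrderedRing 𝕜]

theorem nonneg_of_forall_pos_add_mul_nonneg {c d : 𝕜} (h : ∀ t > 0, 0 ≤ c + t * d) : 0 ≤ d := by
  by_contra! hd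
  have ht : 0 < (|c| + 1) / -d := div_pos (by positivity) (neg_pos.2 hd)
  have hcancel : (|c| + 1) / -d * d = -(|c| + 1) := by
    field_simp [hd.ne]
  linarith [h _ ht, le_abs_self c]

variable {n : Type*} [Fintype n] [DecidableEq n]

theorem Matrix.isUnit_one_add_smul_single (k l : n) {t : 𝕜} (ht : 0 ≤ t) :
    IsUnit (1 + t • single k l (1 : 𝕜)) := by
  rw [isUnit_iff_isUnit_det, single_eq_single_vecMulVec_single, ← smul_vecMulVec,
    vecMulVec_eq Unit, det_one_add_replicateCol_mul_replicateRow, isUnit_iff_ne_zero]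
  have h : 0 ≤ Pi.single l (1 : 𝕜) ⬝ᵥ t • Pi.single k 1 := by
    simp only [dotProduct_smul, single_dotProduct, one_mul, smul_eq_mul, Pi.single_apply]
    split_ifs <;> simp [ht]
  positivity

theorem Matrix.mul_one_add_smul_single_mul_apply (P Q : Matrix n n 𝕜) (i j k l : n) (t : 𝕜) :
    (P * (1 + t • single k l (1 : 𝕜)) * Q) i j = (P * Q) i j + t * (P i k * Q l j) := by
  rw [mul_add, add_mul, mul_one, add_apply, mul_smul_comm, smul_mul_assoc, smul_apply,
    smul_eq_mul, mul_assoc]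
  congr 2
  rw [mul_apply, Finset.sum_eq_single k]
  · rw [single_mul_apply_same, one_mul]
  · intro b _ hb
    rw [single_mul_apply_of_ne (h := hb), mul_zero]
  · simp

end LinearOrderedField

theorem Matrix.inv_eq_zero_iff {n α : Type*} [Fintype n] [DecidableEq n] [CommRing α]
    {M : Matrix n n α} (hM : IsUnit M) : M⁻¹ = 0 ↔ (1 : Matrix n n α) = 0 := by
  refine ⟨fun h => ?_, fun h => ?_⟩
  · rw [← mul_nonsing_inv M ((isUnit_iff_isUnit_det M).1 hM), h, mul_zero]
  · have := subsingleton_of_zero_eq_one h.symm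
    exact Subsingleton.elim _ _

theorem nonneg_or_nonpos_of_forall_mul_nonneg {m m' n n' R : Type*} [Ring R] [LinearOrder R]
    [IsStrictOrderedRing R] {P : Matrix m n R} {Q : Matrix m' n' R}
    (h : ∀ i k l j, 0 ≤ P i k * Q l j) (hPQ : P = 0 ↔ Q = 0) :
    ((∀ i k, 0 ≤ P i k) ∧ ∀ l j, 0 ≤ Q l j) ∨ ((∀ i k, P i k ≤ 0) ∧ ∀ l j, Q l j ≤ 0) := by
  by_cases hP0 : P = 0
  · simp [hP0, hPQ.1 hP0]
  obtain ⟨i₀, k₀, hP₀⟩ : ∃ i k, P i k ≠ 0 := by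
    by_contra! hzero; exact hP0 (Matrix.ext hzero)
  obtain ⟨l₀, j₀, hQ₀⟩ : ∃ l j, Q l j ≠ 0 := by
    by_contra! hzero; exact hP0 (hPQ.2 (Matrix.ext hzero))
  rcases hP₀.lt_or_gt with hneg | hpos
  · have hQ : ∀ l j, Q l j ≤ 0 := fun l j => nonpos_of_mul_nonneg_right (h i₀ k₀ l j) hneg
    have hP : ∀ i k, P i k ≤ 0 := fun i k =>
      nonpos_of_mul_nonneg_left (h i k l₀ j₀) ((hQ l₀ j₀).lt_of_ne hQ₀)
    exact Or.inr ⟨hP, hQ⟩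
  · have hQ : ∀ l j, 0 ≤ Q l j := fun l j => nonneg_of_mul_nonneg_right (h i₀ k₀ l j) hpos
    have hP : ∀ i k, 0 ≤ P i k := fun i k =>
      nonneg_of_mul_nonneg_left (h i k l₀ j₀) ((hQ l₀ j₀).lt_of_ne' hQ₀)
    exact Or.inl ⟨hP, hQ⟩

theorem invNonneg_inv_of_nonneg {n : ℕ} {B : Matrix (Fin n) (Fin n) ℝ} (hB : IsUnit B)
    (hB₀ : ∀ i j, 0 ≤ B i j) : InvNonneg B⁻¹ := by
  refine ⟨isUnit_nonsing_inv_iff.2 hB, ?_⟩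
  rwa [nonsing_inv_nonsing_inv B ((isUnit_iff_isUnit_det B).1 hB)]

theorem invNonneg_neg_iff {n : ℕ} {M : Matrix (Fin n) (Fin n) ℝ} :
    InvNonneg (-M) ↔ IsUnit M ∧ ∀ i j, M⁻¹ i j ≤ 0 := by
  rw [InvNonneg, IsUnit.neg_iff]
  refine and_congr_right fun hM => ?_
  have hinv : (-M)⁻¹ = -M⁻¹ := inv_eq_right_inv <| by
    rw [neg_mul_neg, mul_nonsing_inv M ((isUnit_iff_isUnit_det M).1 hM)]
  simp [hinv]

theorem inv_apply_mul_inv_apply_nonneg {n : ℕ} {X Y : Matrix (Fin n) (Fin n) ℝ}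
    (hL : ∀ A, InvNonneg A → InvNonneg (X * A * Y)) (i k l j : Fin n) :
    0 ≤ Y⁻¹ i k * X⁻¹ l j := by
  refine nonneg_of_forall_pos_add_mul_nonneg (c := (Y⁻¹ * X⁻¹) i j) fun t ht => ?_
  set B := 1 + t • single k l (1 : ℝ)
  have hB : IsUnit B := isUnit_one_add_smul_single k l ht.le
  have hB₀ : ∀ a b, 0 ≤ B a b := fun a b => by
    refine add_nonneg (zero_le_one_elem a b) (smul_nonneg ht.le ?_)
    rw [single_apply]
    split_ifs <;> norm_num
  have h := (hL _ (invNonneg_inv_of_nonneg hB hB₀)).2 i j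
  rwa [Matrix.mul_inv_rev, Matrix.mul_inv_rev,
    nonsing_inv_nonsing_inv B ((isUnit_iff_isUnit_det B).1 hB), ← mul_assoc, mul_one_add_smul_single_mul_apply] at h

theorem stmt7 (n : ℕ) (X Y : Matrix (Fin n) (Fin n) ℝ)
    (hL : ∀ A : Matrix (Fin n) (Fin n) ℝ, InvNonneg A → InvNonneg (X * A * Y)) :
    (InvNonneg X ∧ InvNonneg Y) ∨ (InvNonneg (-X) ∧ InvNonneg (-Y)) := by
  have hXY : IsUnit (X * Y) := by
    simpa using (hL 1 (by simpa using invNonneg_inv_of_nonneg isUnit_one zero_le_one_elem)).1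
  have hX := isUnit_of_mul_isUnit_left hXY
  have hY := isUnit_of_mul_isUnit_right hXY
  rcases nonneg_or_nonpos_of_forall_mul_nonneg (inv_apply_mul_inv_apply_nonneg hL)
      (by rw [inv_eq_zero_iff hY, inv_eq_zero_iff hX]) with ⟨hY₀, hX₀⟩ | ⟨hY₀, hX₀⟩
  · exact Or.inl ⟨⟨hX, hX₀⟩, ⟨hY, hY₀⟩⟩
  · exact Or.inr ⟨invNonneg_neg_iff.2 ⟨hX, hX₀⟩, invNonneg_neg_iff.2 ⟨hY, hY₀⟩⟩
end

section
/- Let X, Y ∈ ℝ^{n×n} and define L(A) = XAY on ℝ^{n×n}. Then L is a bijection of the set of inverse nonnegative n×n matrices onto itself if and only if either X and Y are both monomial matrices or −X and −Y are both monomial matrices. -/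
def Monomial {n : ℕ} (M : Matrix (Fin n) (Fin n) ℝ) : Prop :=
  (∀ i j, 0 ≤ M i j) ∧ (∀ i, ∃! j, M i j ≠ 0) ∧ (∀ j, ∃! i, M i j ≠ 0)

open Matrix

variable {𝕜 : Type*} [Field 𝕜] [LinearOrder 𝕜] [IsStrictOrderedRing 𝕜]

theorem nonneg_of_forall_nonneg_add_mul {a b : 𝕜} (h : ∀ t, 0 ≤ t → 0 ≤ a + t * b) : 0 ≤ b := by
  by_contra! hb
  have ha : 0 ≤ a := by simpa using h 0 le_rfl
  have hmul : (a + 1) / -b * b = -(a + 1) := by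
    field_simp [hb.ne]
  linarith [h ((a + 1) / -b) (div_nonneg (by linarith) (by linarith))]

namespace Matrix

variable {l m n : Type*}

section SignPattern

variable {V : Matrix l m 𝕜} {U : Matrix m n 𝕜}

theorem nonneg_of_mul_nonneg_of_pos (h : ∀ k i j k', 0 ≤ V k i * U j k') {a : l} {b : m}
    (hV : 0 < V a b) (hU : U ≠ 0) : (∀ i j, 0 ≤ V i j) ∧ ∀ i j, 0 ≤ U i j := by
  have hU0 : ∀ j k', 0 ≤ U j k' := fun j k' => (mul_nonneg_iff_of_pos_left hV).mp (h a b j k')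
  obtain ⟨c, d, hcd⟩ : ∃ c d, U c d ≠ 0 := by
    by_contra! h0
    exact hU (ext h0)
  have hpos : 0 < U c d := (hU0 c d).lt_of_ne' hcd
  exact ⟨fun k i => (mul_nonneg_iff_of_pos_right hpos).mp (h k i c d), hU0⟩

theorem nonneg_or_neg_nonneg_of_mul_nonneg (h : ∀ k i j k', 0 ≤ V k i * U j k') (hV : V ≠ 0)
    (hU : U ≠ 0) :
    ((∀ i j, 0 ≤ V i j) ∧ ∀ i j, 0 ≤ U i j) ∨
      ((∀ i j, 0 ≤ (-V) i j) ∧ ∀ i j, 0 ≤ (-U) i j) := by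
  obtain ⟨a, b, hab⟩ : ∃ a b, V a b ≠ 0 := by
    by_contra! h0
    exact hV (ext h0)
  rcases hab.lt_or_gt with hneg | hpos
  · refine Or.inr (nonneg_of_mul_nonneg_of_pos (a := a) (b := b) ?_ ?_ (neg_ne_zero.mpr hU))
    · simpa only [neg_apply, neg_mul_neg] using h
    · simpa using hneg
  · exact Or.inl (nonneg_of_mul_nonneg_of_pos h hpos hU)

end SignPattern

theorem one_add_single_nonneg [DecidableEq m] {t : 𝕜} (ht : 0 ≤ t) (i j a b : m) :
    0 ≤ (1 + single i j t : Matrix m m 𝕜) a b := by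
  rw [add_apply, one_apply, single_apply]
  split_ifs <;> linarith

variable [Fintype m]

theorem mul_apply_nonneg {A : Matrix l m 𝕜} {B : Matrix m n 𝕜} (hA : ∀ i j, 0 ≤ A i j)
    (hB : ∀ i j, 0 ≤ B i j) (i : l) (k : n) : 0 ≤ (A * B) i k :=
  Finset.sum_nonneg fun j _ => mul_nonneg (hA i j) (hB j k)

theorem mul_apply_eq_zero_of_nonneg {A : Matrix l m 𝕜} {B : Matrix m n 𝕜}
    (hA : ∀ i j, 0 ≤ A i j) (hB : ∀ i j, 0 ≤ B i j) {i : l} {k : n} (h : (A * B) i k = 0)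
    (j : m) : A i j * B j k = 0 :=
  (Finset.sum_eq_zero_iff_of_nonneg fun j _ => mul_nonneg (hA i j) (hB j k)).mp h j
    (Finset.mem_univ j)

variable [DecidableEq m]

theorem existsUnique_ne_zero_of_nonneg_of_mul_eq_one {A B : Matrix m m 𝕜}
    (hA : ∀ i j, 0 ≤ A i j) (hB : ∀ i j, 0 ≤ B i j) (hAB : A * B = 1) (i : m) :
    ∃! j, A i j ≠ 0 := by
  have hBA : B * A = 1 := mul_eq_one_comm.mp hAB
  obtain ⟨j, hj⟩ : ∃ j, A i j ≠ 0 := by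
    by_contra! h
    simpa [mul_apply, h] using congr_fun (congr_fun hAB i) i
  refine ⟨j, hj, fun j' hj' => by_contra fun hne => ?_⟩
  -- `(A * B) i l = 0` for `l ≠ i` and `(B * A) j' j = 0` together kill the whole row `j'` of `B`.
  have hrow : ∀ l, B j' l = 0 := by
    intro l
    rcases eq_or_ne l i with rfl | hl
    · have h0 : (B * A) j' j = 0 := by rw [hBA, one_apply_ne hne]
      exact (mul_eq_zero.mp (mul_apply_eq_zero_of_nonneg hB hA h0 l)).resolve_right hj
    · have h0 : (A * B) i l = 0 := by rw [hAB, one_apply_ne hl.symm]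
      exact (mul_eq_zero.mp (mul_apply_eq_zero_of_nonneg hA hB h0 j')).resolve_left hj'
  simpa [mul_apply, hrow] using congr_fun (congr_fun hBA j') j'

theorem mul_single_mul_apply (V : Matrix l m 𝕜) (U : Matrix m n 𝕜) (i j : m) (c : 𝕜) (k : l)
    (k' : n) : (V * single i j c * U) k k' = V k i * c * U j k' := by
  rw [Matrix.mul_assoc, mul_apply,
    Finset.sum_eq_single i (by simp +contextual [single_mul_apply_of_ne]) (by simp)]
  simp [mul_assoc]

theorem isUnit_one_add_single {t : 𝕜} (ht : 0 ≤ t) (i j : m) : IsUnit (1 + single i j t) := by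
  rcases eq_or_ne i j with rfl | hij
  · rw [isUnit_iff_isUnit_det, ← diagonal_single, ← diagonal_one, diagonal_add, det_diagonal]
    refine (Finset.prod_pos fun a _ => ?_).ne'.isUnit
    rw [Pi.single_apply]
    split_ifs <;> linarith
  · rw [isUnit_iff_isUnit_det, ← transvection, det_transvection_of_ne _ _ hij]
    exact isUnit_one

theorem mul_nonneg_of_forall_isUnit_nonneg {V : Matrix l m 𝕜} {U : Matrix m n 𝕜}
    (h : ∀ B : Matrix m m 𝕜, IsUnit B → (∀ i j, 0 ≤ B i j) → ∀ k k', 0 ≤ (V * B * U) k k')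
    (k : l) (i j : m) (k' : n) : 0 ≤ V k i * U j k' := by
  refine nonneg_of_forall_nonneg_add_mul (a := (V * U) k k') fun t ht => ?_
  have hB := h _ (isUnit_one_add_single ht i j) (one_add_single_nonneg ht i j) k k'
  rw [Matrix.mul_add, Matrix.add_mul, Matrix.mul_one, add_apply, mul_single_mul_apply] at hB
  linarith

end Matrix

section InverseNonnegative

variable {n : ℕ}

theorem invNonneg_one : InvNonneg (1 : Matrix (Fin n) (Fin n) ℝ) :=
  ⟨isUnit_one, fun i j => by
    rw [inv_one, one_apply]
    split_ifs <;> norm_num⟩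

theorem InvNonneg.mul {A B : Matrix (Fin n) (Fin n) ℝ} (hA : InvNonneg A) (hB : InvNonneg B) :
    InvNonneg (A * B) :=
  ⟨hA.1.mul hB.1, by rw [Matrix.mul_inv_rev]; exact mul_apply_nonneg hB.2 hA.2⟩

theorem invNonneg_inv {M : Matrix (Fin n) (Fin n) ℝ} (hM : IsUnit M) (h : ∀ i j, 0 ≤ M i j) :
    InvNonneg M⁻¹ :=
  ⟨isUnit_nonsing_inv_iff.mpr hM, by
    rwa [nonsing_inv_nonsing_inv _ ((isUnit_iff_isUnit_det M).mp hM)]⟩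

-- Since `0⁻¹ = 0`, inverting the entries of `Mᵀ` inverts a monomial matrix.
theorem Monomial.mul_transpose_map_inv {M : Matrix (Fin n) (Fin n) ℝ} (hM : Monomial M) :
    M * Mᵀ.map (·⁻¹) = 1 := by
  obtain ⟨-, hrow, hcol⟩ := hM
  ext i k
  simp only [mul_apply, transpose_apply, map_apply]
  rcases eq_or_ne i k with rfl | hik
  · obtain ⟨j, hj, huniq⟩ := hrow i
    have hzero : ∀ b, b ≠ j → M i b = 0 := fun b hb => not_ne_iff.mp fun h => hb (huniq b h)
    rw [one_apply_eq, Finset.sum_eq_single j (fun b _ hb => by simp [hzero b hb]) (by simp),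
      mul_inv_cancel₀ hj]
  · rw [one_apply_ne hik]
    refine Finset.sum_eq_zero fun j _ => by_contra fun h => ?_
    obtain ⟨hi, hk⟩ := mul_ne_zero_iff.mp h
    exact hik ((hcol j).unique hi (by simpa using hk))

theorem monomial_iff_nonneg_and_invNonneg {M : Matrix (Fin n) (Fin n) ℝ} :
    Monomial M ↔ (∀ i j, 0 ≤ M i j) ∧ InvNonneg M := by
  refine ⟨fun hM => ⟨hM.1, ?_⟩, fun ⟨h0, hU, hinv⟩ => ?_⟩
  · have hMN := hM.mul_transpose_map_inv
    refine ⟨IsUnit.of_mul_eq_one _ hMN, fun i j => ?_⟩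
    rw [inv_eq_right_inv hMN]
    exact inv_nonneg.mpr (hM.1 j i)
  · have hdet := (isUnit_iff_isUnit_det M).mp hU
    refine ⟨h0, existsUnique_ne_zero_of_nonneg_of_mul_eq_one h0 hinv (mul_nonsing_inv M hdet),
      existsUnique_ne_zero_of_nonneg_of_mul_eq_one (A := Mᵀ) (B := M⁻¹ᵀ) (fun i j => h0 j i)
        (fun i j => hinv j i) ?_⟩
    rw [← transpose_mul, nonsing_inv_mul M hdet, transpose_one]

theorem monomial_of_nonneg_of_invNonneg_mul {X Y : Matrix (Fin n) (Fin n) ℝ}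
    (hX : ∀ i j, 0 ≤ X i j) (hY : ∀ i j, 0 ≤ Y i j) (hXY : InvNonneg (X * Y)) :
    Monomial X ∧ Monomial Y := by
  obtain ⟨hXYU, hXYinv⟩ := hXY
  have hXU : IsUnit X := isUnit_of_mul_isUnit_left hXYU
  have hYU : IsUnit Y := isUnit_of_mul_isUnit_right hXYU
  have hXinv : X⁻¹ = Y * (X * Y)⁻¹ := by
    rw [Matrix.mul_inv_rev, mul_nonsing_inv_cancel_left Y _ ((isUnit_iff_isUnit_det Y).mp hYU)]
  have hYinv : Y⁻¹ = (X * Y)⁻¹ * X := by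
    rw [Matrix.mul_inv_rev, nonsing_inv_mul_cancel_right X _ ((isUnit_iff_isUnit_det X).mp hXU)]
  exact ⟨monomial_iff_nonneg_and_invNonneg.mpr ⟨hX, hXU, hXinv ▸ mul_apply_nonneg hY hXYinv⟩,
    monomial_iff_nonneg_and_invNonneg.mpr ⟨hY, hYU, hYinv ▸ mul_apply_nonneg hXYinv hX⟩⟩

theorem nonneg_mul_mul_of_surjOn {X Y : Matrix (Fin n) (Fin n) ℝ}
    (hL : Set.SurjOn (fun A => X * A * Y) {A | InvNonneg A} {A | InvNonneg A})
    (hX : IsUnit X) (hY : IsUnit Y) (C : Matrix (Fin n) (Fin n) ℝ) (hC : IsUnit C)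
    (hC0 : ∀ i j, 0 ≤ C i j) : ∀ i j, 0 ≤ (Y * C * X) i j := by
  obtain ⟨A, hA, hAC⟩ := hL (invNonneg_inv hC hC0)
  have hCA : C = Y⁻¹ * A⁻¹ * X⁻¹ := by
    rw [← nonsing_inv_nonsing_inv C ((isUnit_iff_isUnit_det C).mp hC), ← hAC,
      Matrix.mul_inv_rev, Matrix.mul_inv_rev, Matrix.mul_assoc]
  have hYCX : Y * C * X = A⁻¹ := by
    rw [hCA, Matrix.mul_assoc Y⁻¹,
      mul_nonsing_inv_cancel_left Y _ ((isUnit_iff_isUnit_det Y).mp hY),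
      nonsing_inv_mul_cancel_right X _ ((isUnit_iff_isUnit_det X).mp hX)]
  exact hYCX ▸ hA.2

theorem bijOn_mul_mul_of_monomial {X Y : Matrix (Fin n) (Fin n) ℝ} (hX : Monomial X)
    (hY : Monomial Y) :
    Set.BijOn (fun A => X * A * Y) {A | InvNonneg A} {A | InvNonneg A} := by
  obtain ⟨hX0, hXU, hXinv⟩ := monomial_iff_nonneg_and_invNonneg.mp hX
  obtain ⟨hY0, hYU, hYinv⟩ := monomial_iff_nonneg_and_invNonneg.mp hY
  have hXdet := (isUnit_iff_isUnit_det X).mp hXU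
  have hYdet := (isUnit_iff_isUnit_det Y).mp hYU
  refine Set.InvOn.bijOn (f' := fun C => X⁻¹ * C * Y⁻¹) ⟨fun A _ => ?_, fun C _ => ?_⟩
    (fun A hA => (InvNonneg.mul ⟨hXU, hXinv⟩ hA).mul ⟨hYU, hYinv⟩)
    (fun C hC => ((invNonneg_inv hXU hX0).mul hC).mul (invNonneg_inv hYU hY0))
  · simp [Matrix.mul_assoc, nonsing_inv_mul_cancel_left X _ hXdet, mul_nonsing_inv Y hYdet]
  · simp [Matrix.mul_assoc, mul_nonsing_inv_cancel_left X _ hXdet, nonsing_inv_mul Y hYdet]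

end InverseNonnegative

theorem stmt8 (n : ℕ) (X Y : Matrix (Fin n) (Fin n) ℝ) :
    Set.BijOn (fun A => X * A * Y) {A | InvNonneg A} {A | InvNonneg A} ↔
      (Monomial X ∧ Monomial Y) ∨ (Monomial (-X) ∧ Monomial (-Y)) := by
  refine ⟨fun hL => ?_, ?_⟩
  · have hXY : InvNonneg (X * Y) := by simpa using hL.mapsTo invNonneg_one
    have hXU : IsUnit X := isUnit_of_mul_isUnit_left hXY.1
    have hYU : IsUnit Y := isUnit_of_mul_isUnit_right hXY.1
    rcases isEmpty_or_nonempty (Fin n) with _ | _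
    · simp [Monomial]
    have hprod := mul_nonneg_of_forall_isUnit_nonneg (nonneg_mul_mul_of_surjOn hL.surjOn hXU hYU)
    rcases nonneg_or_neg_nonneg_of_mul_nonneg hprod hYU.ne_zero hXU.ne_zero with
      ⟨hY0, hX0⟩ | ⟨hY0, hX0⟩
    · exact Or.inl (monomial_of_nonneg_of_invNonneg_mul hX0 hY0 hXY)
    · exact Or.inr (monomial_of_nonneg_of_invNonneg_mul hX0 hY0 (by rwa [neg_mul_neg]))
  · rintro (⟨hX, hY⟩ | ⟨hX, hY⟩)
    · exact bijOn_mul_mul_of_monomial hX hY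
    · simpa using bijOn_mul_mul_of_monomial hX hY
end

section
/- Let X ∈ ℝ^{m×m} be row positive and Y ∈ ℝ^{n×n} be inverse nonnegative. Then for every semipositive A ∈ ℝ^{m×n}, the matrix XAY is semipositive. -/
def Semipositive {m n : ℕ} (A : Matrix (Fin m) (Fin n) ℝ) : Prop :=
  ∃ x : Fin n → ℝ, (∀ j, 0 ≤ x j) ∧ ∀ i, 0 < A.mulVec x i

theorem stmt10 (m n : ℕ) (X : Matrix (Fin m) (Fin m) ℝ) (Y : Matrix (Fin n) (Fin n) ℝ)
    (hX1 : ∀ i j, 0 ≤ X i j) (hX2 : ∀ i, ∃ j, X i j ≠ 0)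
    (hY : IsUnit Y) (hYinv : ∀ i j, 0 ≤ Y⁻¹ i j) :
    ∀ A : Matrix (Fin m) (Fin n) ℝ, Semipositive A → Semipositive (X * A * Y) := by
  intro A ⟨x, hx, hAx⟩
  refine ⟨Y⁻¹.mulVec x, ?_, ?_⟩
  · intro j
    simp only [Matrix.mulVec, dotProduct]
    exact Finset.sum_nonneg fun k _ => mul_nonneg (hYinv j k) (hx k)
  · intro i
    have hYY : Y * Y⁻¹ = 1 := Matrix.mul_nonsing_inv Y (Matrix.isUnit_iff_isUnit_det Y |>.mp hY)
    have key : (X * A * Y).mulVec (Y⁻¹.mulVec x) = X.mulVec (A.mulVec x) := by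
      have h2 : Y.mulVec (Y⁻¹.mulVec x) = x := by
        rw [Matrix.mulVec_mulVec, hYY, Matrix.one_mulVec]
      rw [← Matrix.mulVec_mulVec, ← Matrix.mulVec_mulVec, h2]
    rw [key]
    obtain ⟨j, hj⟩ := hX2 i
    have hjpos : 0 < X i j := lt_of_le_of_ne (hX1 i j) (Ne.symm hj)
    calc (0:ℝ) < X i j * A.mulVec x j := mul_pos hjpos (hAx j)
    _ ≤ ∑ k, X i k * A.mulVec x k := by
        apply Finset.single_le_sum (f := fun k => X i k * A.mulVec x k)
          (fun k _ => mul_nonneg (hX1 i k) (le_of_lt (hAx k))) (Finset.mem_univ j)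
    _ = X.mulVec (A.mulVec x) i := rfl
end

section
/- Suppose X ∈ ℝ^{m×m} (m ≥ 2) has a row that is entrywise ≤ 0 and nonzero, and another row that is entrywise ≥ 0 and nonzero. Let e be the all-ones vector, and let A be the m×n matrix whose first column is e and all other columns are zero. Then A is semipositive but for any invertible Y ∈ ℝ^{n×n}, XAY is not semipositive. -/
theorem stmt14 (m n : ℕ) (hn : 0 < n) (X : Matrix (Fin m) (Fin m) ℝ)
    (i₁ i₂ : Fin m) (hne : i₁ ≠ i₂)
    (h1 : (∀ j, X i₁ j ≤ 0) ∧ ∃ j, X i₁ j ≠ 0)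
    (h2 : (∀ j, 0 ≤ X i₂ j) ∧ ∃ j, X i₂ j ≠ 0)
    (A : Matrix (Fin m) (Fin n) ℝ)
    (hA : A = fun _ l => if l = ⟨0, hn⟩ then (1 : ℝ) else 0) :
    Semipositive A ∧ ∀ Y : Matrix (Fin n) (Fin n) ℝ, IsUnit Y →
      ¬ Semipositive (X * A * Y) := by
  have hAv : ∀ w : Fin n → ℝ, A.mulVec w = fun _ => w ⟨0, hn⟩ := by
    intro w
    funext i
    simp [hA, Matrix.mulVec, dotProduct, ite_mul, Finset.sum_ite_eq']
  constructor
  · refine ⟨fun _ => 1, fun _ => zero_le_one, fun i => ?_⟩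
    rw [hAv]
    exact one_pos
  · rintro Y _ ⟨x, hx, hpos⟩
    have hv : (X * A * Y).mulVec x = X.mulVec (A.mulVec (Y.mulVec x)) := by
      rw [Matrix.mulVec_mulVec, Matrix.mulVec_mulVec, Matrix.mul_assoc]
    set c : ℝ := (Y.mulVec x) ⟨0, hn⟩ with hc
    have hval : ∀ i, (X * A * Y).mulVec x i = (∑ j, X i j) * c := by
      intro i
      rw [hv, hAv]
      rw [Finset.sum_mul]
      simp only [Matrix.mulVec, dotProduct]
      rfl
    have p1 := hpos i₁
    have p2 := hpos i₂
    rw [hval] at p1 p2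
    have s1 : (∑ j, X i₁ j) ≤ 0 := Finset.sum_nonpos fun j _ => h1.1 j
    have s2 : 0 ≤ (∑ j, X i₂ j) := Finset.sum_nonneg fun j _ => h2.1 j
    have hcneg : c < 0 := by
      by_contra h
      push_neg at h
      exact absurd p1 (not_lt.2 (mul_nonpos_of_nonpos_of_nonneg s1 h))
    exact absurd p2 (not_lt.2 (mul_nonpos_of_nonneg_of_nonpos s2 hcneg.le))
end
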